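/- arXiv:1906.11333 — 3 statements merged into one kernel-verified Lean document; each statement's English description precedes it below -/
import Mathlib

section
/- Let W1, W2 be independent standard Gaussian random variables, let μ ∈ ℝ, σ_A > 0, σ > 0, β ≠ 0, and define X = μ + σ_A·W1 and Y = β·X + σ·W2. Set ρ = β²σ_A²/(β²σ_A² + σ²). Then the conditional distribution of X given Y is Gaussian with mean (1−ρ)·μ + ρ·Y/β and variance σ²·ρ/β²; in particular E[X | Y] = (1−ρ)·μ + ρ·Y/β almost surely. -/
/-!
Since `X` and `W2` are independent, the joint law of `(X, Y)` is `N(μ₀, σ_A²) ⊗ₘ N(β ·, σ²)`.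
It has a density on `ℝ²`, and completing the square in `x` rewrites that density as
the `N(βμ₀, β²σ_A² + σ²)` density of `y` times the claimed Gaussian density of `x` given `y`.
So the law of `(Y, X)` is `μ.map Y ⊗ₘ κ` for the claimed kernel `κ`, and uniqueness of
disintegrations identifies `condDistrib X Y μ` with `κ`. The conditional expectation is
the mean of `κ (Y ω)`.
-/

open MeasureTheory ProbabilityTheory Real
open scoped NNReal ENNReal

lemma MeasureTheory.Measure.map_swap_withDensity_prod {α β : Type*} [MeasurableSpace α]
    [MeasurableSpace β] (μ : Measure α) (ν : Measure β) [SFinite μ] [SFinite ν]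
    {f : α × β → ℝ≥0∞} (hf : Measurable f) :
    ((μ.prod ν).withDensity f).map Prod.swap = (ν.prod μ).withDensity (f ∘ Prod.swap) := by
  ext s hs
  rw [Measure.map_apply measurable_swap hs, withDensity_apply _ (measurable_swap hs),
    withDensity_apply _ hs, ← Measure.prod_swap (μ := μ) (ν := ν),
    setLIntegral_map hs (hf.comp measurable_swap) measurable_swap]
  simp only [Function.comp_apply, Prod.swap_swap]

lemma MeasureTheory.Measure.map_prod_eq_compProd {α β γ : Type*} [MeasurableSpace α]
    [MeasurableSpace β] [MeasurableSpace γ] (ν : Measure α) (ρ : Measure β) [SFinite ν] [SFinite ρ]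
    {g : α → β → γ} (hg : Measurable (Function.uncurry g)) (κ : Kernel α γ) [IsSFiniteKernel κ]
    (hκ : ∀ a, κ a = ρ.map (g a)) :
    (ν.prod ρ).map (fun p => (p.1, g p.1 p.2)) = ν ⊗ₘ κ := by
  have hmeas : Measurable fun p : α × β => (p.1, g p.1 p.2) := measurable_fst.prodMk hg
  ext s hs
  rw [Measure.map_apply hmeas hs, Measure.prod_apply (hmeas hs), Measure.compProd_apply hs]
  refine lintegral_congr fun a => ?_
  have hga : Measurable (g a) := hg.comp measurable_prodMk_left
  rw [hκ, Measure.map_apply hga (measurable_prodMk_left hs)]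
  rfl

namespace ProbabilityTheory

lemma gaussianReal_zero_one_map_affine (a b : ℝ) :
    (gaussianReal 0 1).map (fun x => a + b * x) = gaussianReal a (b ^ 2).toNNReal := by
  rw [show (fun x => a + b * x) = (a + ·) ∘ (b * ·) from rfl,
    ← Measure.map_map (measurable_const_add a) (measurable_const_mul b),
    gaussianReal_map_const_mul, gaussianReal_map_const_add]
  congr 1
  · ring
  · ext; simp [Real.coe_toNNReal _ (sq_nonneg b)]

section GaussianKernel

variable {α : Type*} [MeasurableSpace α]

noncomputable def gaussianKernel (m : α → ℝ) (hm : Measurable m) (v : ℝ≥0) : Kernel α ℝ where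
  toFun a := gaussianReal (m a) v
  measurable' := measurable_gaussianReal.comp (hm.prodMk measurable_const)

@[simp]
lemma gaussianKernel_apply (m : α → ℝ) (hm : Measurable m) (v : ℝ≥0) (a : α) :
    gaussianKernel m hm v a = gaussianReal (m a) v := rfl

instance (m : α → ℝ) (hm : Measurable m) (v : ℝ≥0) : IsMarkovKernel (gaussianKernel m hm v) :=
  ⟨fun a => by rw [gaussianKernel_apply]; infer_instance⟩

lemma measurable_gaussianPDF_of_measurable_mean {m : α → ℝ} (hm : Measurable m) (v : ℝ≥0) :
    Measurable fun p : α × ℝ => gaussianPDF (m p.1) v p.2 :=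
  measurable_uncurry_gaussianPDF.comp (f := fun p : α × ℝ => (m p.1, v, p.2)) (by fun_prop)

lemma gaussianKernel_eq_withDensity {m : α → ℝ} (hm : Measurable m) {v : ℝ≥0} (hv : v ≠ 0) :
    gaussianKernel m hm v
      = (Kernel.const α volume).withDensity fun a x => gaussianPDF (m a) v x := by
  ext1 a
  rw [Kernel.withDensity_apply _ (measurable_gaussianPDF_of_measurable_mean hm v),
    Kernel.const_apply, gaussianKernel_apply, gaussianReal_of_var_ne_zero _ hv]

end GaussianKernel

lemma gaussianReal_compProd_gaussianKernel (m₀ : ℝ) {v w : ℝ≥0} (hv : v ≠ 0) (hw : w ≠ 0)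
    {m : ℝ → ℝ} (hm : Measurable m) :
    gaussianReal m₀ v ⊗ₘ gaussianKernel m hm w
      = (volume.prod volume).withDensity
          fun p => gaussianPDF m₀ v p.1 * gaussianPDF (m p.1) w p.2 := by
  have hκ := gaussianKernel_eq_withDensity hm hw
  have : IsSFiniteKernel ((Kernel.const ℝ volume).withDensity
      fun a x => gaussianPDF (m a) w x) := by rw [← hκ]; infer_instance
  rw [hκ, Measure.compProd_withDensity (measurable_gaussianPDF_of_measurable_mean hm w),
    Measure.compProd_const, gaussianReal_of_var_ne_zero _ hv,
    prod_withDensity_left (measurable_gaussianPDF _ _)]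
  exact (withDensity_mul _ ((measurable_gaussianPDF _ _).comp measurable_fst)
    (measurable_gaussianPDF_of_measurable_mean hm w)).symm

lemma gaussianPDFReal_prior_mul_likelihood {μ₀ σA σ β ρ : ℝ} (hσA : σA ≠ 0) (hσ : σ ≠ 0)
    (hβ : β ≠ 0) (hρ : ρ = β ^ 2 * σA ^ 2 / (β ^ 2 * σA ^ 2 + σ ^ 2)) (x y : ℝ) :
    gaussianPDFReal μ₀ (σA ^ 2).toNNReal x * gaussianPDFReal (β * x) (σ ^ 2).toNNReal y
      = gaussianPDFReal (β * μ₀) (β ^ 2 * σA ^ 2 + σ ^ 2).toNNReal y *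
        gaussianPDFReal ((1 - ρ) * μ₀ + ρ * y / β) (σ ^ 2 * ρ / β ^ 2).toNNReal x := by
  have hS : 0 < β ^ 2 * σA ^ 2 + σ ^ 2 := by positivity
  have hρpos : 0 < ρ := by rw [hρ]; positivity
  have hV : 0 < σ ^ 2 * ρ / β ^ 2 := by positivity
  simp only [gaussianPDFReal]
  rw [Real.coe_toNNReal _ (sq_nonneg σA), Real.coe_toNNReal _ (sq_nonneg σ),
    Real.coe_toNNReal _ hS.le, Real.coe_toNNReal _ hV.le]
  have hconst : (√(2 * π * σA ^ 2))⁻¹ * (√(2 * π * σ ^ 2))⁻¹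
      = (√(2 * π * (β ^ 2 * σA ^ 2 + σ ^ 2)))⁻¹ * (√(2 * π * (σ ^ 2 * ρ / β ^ 2)))⁻¹ := by
    rw [← mul_inv, ← mul_inv, ← Real.sqrt_mul (by positivity), ← Real.sqrt_mul (by positivity)]
    congr 2
    rw [hρ]
    field_simp
  -- completing the square in `x`
  have hexp : -(x - μ₀) ^ 2 / (2 * σA ^ 2) + -(y - β * x) ^ 2 / (2 * σ ^ 2)
      = -(y - β * μ₀) ^ 2 / (2 * (β ^ 2 * σA ^ 2 + σ ^ 2))
        + -(x - ((1 - ρ) * μ₀ + ρ * y / β)) ^ 2 / (2 * (σ ^ 2 * ρ / β ^ 2)) := by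
    rw [hρ]
    field_simp
    ring
  calc (√(2 * π * σA ^ 2))⁻¹ * rexp (-(x - μ₀) ^ 2 / (2 * σA ^ 2)) *
        ((√(2 * π * σ ^ 2))⁻¹ * rexp (-(y - β * x) ^ 2 / (2 * σ ^ 2)))
      = ((√(2 * π * σA ^ 2))⁻¹ * (√(2 * π * σ ^ 2))⁻¹) *
        rexp (-(x - μ₀) ^ 2 / (2 * σA ^ 2) + -(y - β * x) ^ 2 / (2 * σ ^ 2)) := by
        rw [Real.exp_add]; ring
    _ = _ := by rw [hconst, hexp, Real.exp_add]; ring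

lemma gaussianReal_compProd_gaussianKernel_map_swap {μ₀ σA σ β ρ : ℝ} (hσA : σA ≠ 0)
    (hσ : σ ≠ 0) (hβ : β ≠ 0) (hρ : ρ = β ^ 2 * σA ^ 2 / (β ^ 2 * σA ^ 2 + σ ^ 2)) :
    (gaussianReal μ₀ (σA ^ 2).toNNReal
        ⊗ₘ gaussianKernel (β * ·) (measurable_const_mul β) (σ ^ 2).toNNReal).map Prod.swap
      = gaussianReal (β * μ₀) (β ^ 2 * σA ^ 2 + σ ^ 2).toNNReal
        ⊗ₘ gaussianKernel (fun y => (1 - ρ) * μ₀ + ρ * y / β) (by fun_prop)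
            (σ ^ 2 * ρ / β ^ 2).toNNReal := by
  have hρpos : 0 < ρ := by rw [hρ]; positivity
  rw [gaussianReal_compProd_gaussianKernel _ (by positivity) (by positivity),
    gaussianReal_compProd_gaussianKernel _ (by positivity) (by positivity),
    Measure.map_swap_withDensity_prod _ _ (by fun_prop)]
  congr 1
  ext ⟨y, x⟩
  simp only [Function.comp_apply, Prod.swap, gaussianPDF, ← ENNReal.ofReal_mul
    (gaussianPDFReal_nonneg _ _ _), gaussianPDFReal_prior_mul_likelihood hσA hσ hβ hρ x y]

lemma map_prodMk_mul_add_eq_compProd_gaussianKernel {Ω : Type*} [MeasurableSpace Ω]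
    {μ : Measure Ω} [IsFiniteMeasure μ] {X Z : Ω → ℝ} (hX : Measurable X) (hZ : Measurable Z)
    (hXZ : IndepFun X Z μ) (hZlaw : μ.map Z = gaussianReal 0 1) (b c : ℝ) :
    μ.map (fun ω => (X ω, b * X ω + c * Z ω))
      = μ.map X ⊗ₘ gaussianKernel (b * ·) (measurable_const_mul b) (c ^ 2).toNNReal := by
  change μ.map ((fun p : ℝ × ℝ => (p.1, b * p.1 + c * p.2)) ∘ fun ω => (X ω, Z ω)) = _
  rw [← Measure.map_map (by fun_prop) (hX.prodMk hZ),
    (indepFun_iff_map_prod_eq_prod_map_map hX.aemeasurable hZ.aemeasurable).mp hXZ, hZlaw]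
  exact Measure.map_prod_eq_compProd (g := fun x w => b * x + c * w) _ _ (by fun_prop) _ fun a =>
    (gaussianReal_zero_one_map_affine _ _).symm

lemma condExp_ae_eq_of_condDistrib_eq_gaussianReal {Ω β : Type*} [MeasurableSpace Ω]
    [MeasurableSpace β] {μ : Measure Ω} [IsFiniteMeasure μ] {X : Ω → ℝ} {Y : Ω → β}
    (hY : Measurable Y) (hX : Integrable X μ) {m : β → ℝ} {v : β → ℝ≥0}
    (h : ∀ᵐ y ∂μ.map Y, condDistrib X Y μ y = gaussianReal (m y) (v y)) :
    μ[X | MeasurableSpace.comap Y inferInstance] =ᵐ[μ] fun ω => m (Y ω) := by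
  filter_upwards [condExp_ae_eq_integral_condDistrib' hY hX, ae_of_ae_map hY.aemeasurable h]
    with ω hcondExp hcondDistrib
  rw [hcondExp, hcondDistrib, integral_id_gaussianReal]

end ProbabilityTheory

/-- **Bivariate Gaussian conditioning.**
With `W1, W2` independent standard Gaussians, `X = μ₀ + σ_A·W1`, `Y = β·X + σ·W2` and
`ρ = β²σ_A²/(β²σ_A² + σ²)`, the conditional distribution of `X` given `Y = y` is Gaussian
with mean `(1−ρ)·μ₀ + ρ·y/β` and variance `σ²·ρ/β²`; in particular
`E[X ∣ Y] = (1−ρ)·μ₀ + ρ·Y/β` almost surely. -/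
theorem gaussian_condDistrib_linear
    {Ω : Type*} [MeasurableSpace Ω] (μ : Measure Ω) [IsProbabilityMeasure μ]
    (W1 W2 : Ω → ℝ) (hW1 : Measurable W1) (hW2 : Measurable W2)
    (hW : IndepFun W1 W2 μ)
    (hW1law : μ.map W1 = gaussianReal 0 1) (hW2law : μ.map W2 = gaussianReal 0 1)
    (μ₀ σA σ β : ℝ) (hσA : 0 < σA) (hσ : 0 < σ) (hβ : β ≠ 0)
    (X Y : Ω → ℝ) (hX : X = fun ω => μ₀ + σA * W1 ω)
    (hY : Y = fun ω => β * X ω + σ * W2 ω)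
    (ρ : ℝ) (hρ : ρ = β ^ 2 * σA ^ 2 / (β ^ 2 * σA ^ 2 + σ ^ 2)) :
    (∀ᵐ y ∂(μ.map Y),
        condDistrib X Y μ y
          = gaussianReal ((1 - ρ) * μ₀ + ρ * y / β) ((σ ^ 2 * ρ / β ^ 2).toNNReal))
      ∧ μ[X | MeasurableSpace.comap Y inferInstance]
          =ᵐ[μ] fun ω => (1 - ρ) * μ₀ + ρ * Y ω / β := by
  have hXm : Measurable X := by rw [hX]; fun_prop
  have hYm : Measurable Y := by rw [hY]; fun_prop
  have hXlaw : μ.map X = gaussianReal μ₀ (σA ^ 2).toNNReal := by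
    rw [← gaussianReal_zero_one_map_affine, ← hW1law, Measure.map_map (by fun_prop) hW1, hX]
    rfl
  have hXW2 : IndepFun X W2 μ := by
    rw [hX]; exact hW.comp (φ := fun w => μ₀ + σA * w) (by fun_prop) measurable_id
  have hXY : μ.map (fun ω => (X ω, Y ω))
      = gaussianReal μ₀ (σA ^ 2).toNNReal
        ⊗ₘ gaussianKernel (β * ·) (measurable_const_mul β) (σ ^ 2).toNNReal := by
    rw [hY, ← hXlaw]
    exact map_prodMk_mul_add_eq_compProd_gaussianKernel hXm hW2 hXW2 hW2law β σ
  have hYX : μ.map (fun ω => (Y ω, X ω))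
      = gaussianReal (β * μ₀) (β ^ 2 * σA ^ 2 + σ ^ 2).toNNReal
        ⊗ₘ gaussianKernel (fun y => (1 - ρ) * μ₀ + ρ * y / β) (by fun_prop)
            (σ ^ 2 * ρ / β ^ 2).toNNReal := by
    rw [← gaussianReal_compProd_gaussianKernel_map_swap hσA.ne' hσ.ne' hβ hρ, ← hXY,
      Measure.map_map measurable_swap (hXm.prodMk hYm)]
    rfl
  have hYlaw : μ.map Y = gaussianReal (β * μ₀) (β ^ 2 * σA ^ 2 + σ ^ 2).toNNReal := by
    rw [← Measure.fst_map_prodMk hXm, hYX, Measure.fst_compProd]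
  have hcond := condDistrib_ae_eq_of_measure_eq_compProd Y hXm.aemeasurable (hYlaw ▸ hYX)
  have hXint : Integrable X μ := by
    have hid : Integrable id (μ.map X) := hXlaw ▸ (memLp_id_gaussianReal 1).integrable le_rfl
    exact hid.comp_measurable hXm
  exact ⟨hcond, condExp_ae_eq_of_condDistrib_eq_gaussianReal hYm hXint hcond⟩
end

section
/- Let A, Y, and ε be random variables on a common probability space taking values in measurable spaces, and suppose ε is independent of the pair (A, Y). Then for any measurable function f, the prediction R = f(Y, ε) satisfies Separation: R and A are conditionally independent given Y. -/
/-! The prediction is `σ(Y, ε)`-measurable and `σ(Y, ε) = σ(Y) ⊔ σ(ε)`, so it suffices to show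
that `σ(Y) ⊔ σ(ε)` and `σ(A)` are conditionally independent given `σ(Y)`. On the π-system of
sets `s ∩ t` with `s ∈ σ(Y)`, `t ∈ σ(ε)`, the indicator of `s` pulls out of every conditional
expectation given `σ(Y)`, and independence of `ε` from `(A, Y)` turns the event `t` into the
constant factor `μ t`. -/

open MeasureTheory ProbabilityTheory MeasurableSpace

section
variable {Ω : Type*}

lemma isPiSystem_image2_inter (m₁ m₂ : MeasurableSpace Ω) :
    IsPiSystem (Set.image2 (· ∩ ·) {s | MeasurableSet[m₁] s} {t | MeasurableSet[m₂] t}) := by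
  rintro _ ⟨s₁, hs₁, t₁, ht₁, rfl⟩ _ ⟨s₂, hs₂, t₂, ht₂, rfl⟩ -
  exact ⟨s₁ ∩ s₂, hs₁.inter hs₂, t₁ ∩ t₂, ht₁.inter ht₂, Set.inter_inter_inter_comm _ _ _ _⟩

lemma generateFrom_image2_inter (m₁ m₂ : MeasurableSpace Ω) :
    generateFrom (Set.image2 (· ∩ ·) {s | MeasurableSet[m₁] s} {t | MeasurableSet[m₂] t})
      = m₁ ⊔ m₂ := by
  refine le_antisymm (generateFrom_le ?_) (sup_le (fun s hs => ?_) (fun t ht => ?_))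
  · rintro _ ⟨s, hs, t, ht, rfl⟩
    exact (le_sup_left (a := m₁) (b := m₂) s hs).inter (le_sup_right (a := m₁) (b := m₂) t ht)
  · exact measurableSet_generateFrom ⟨s, hs, Set.univ, .univ, Set.inter_univ s⟩
  · exact measurableSet_generateFrom ⟨Set.univ, .univ, t, ht, Set.univ_inter t⟩

variable {mΩ : MeasurableSpace Ω} {μ : Measure Ω} [IsFiniteMeasure μ]

lemma condExp_inter_ae_eq_mul_of_indep {m m' mε : MeasurableSpace Ω} (hm : m ≤ m')
    (hm' : m' ≤ mΩ) (hmε : mε ≤ mΩ) (h : Indep mε m' μ) {t B : Set Ω}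
    (ht : MeasurableSet[mε] t) (hB : MeasurableSet[m'] B) :
    μ⟦t ∩ B | m⟧ =ᵐ[μ] fun ω => μ.real t * (μ⟦B | m⟧) ω := by
  have hmΩ : m ≤ mΩ := hm.trans hm'
  have hB' : MeasurableSet[mΩ] B := hm' B hB
  have htB : MeasurableSet[mΩ] (t ∩ B) := (hmε t ht).inter hB'
  refine (ae_eq_condExp_of_forall_setIntegral_eq hmΩ ((integrable_const (1 : ℝ)).indicator htB)
    (fun s _ _ => (integrable_condExp.const_mul _).integrableOn) (fun s hs _ => ?_)
    (stronglyMeasurable_condExp.const_mul _).aestronglyMeasurable).symm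
  rw [integral_const_mul, setIntegral_condExp hmΩ ((integrable_const (1 : ℝ)).indicator hB') hs,
    integral_indicator_const _ hB', integral_indicator_const _ htB,
    measureReal_restrict_apply hB', measureReal_restrict_apply htB, Set.inter_assoc]
  simp [measureReal_def, (Indep_iff _ _ μ).1 h t (B ∩ s) ht (hB.inter (hm s hs))]

lemma condExp_inter_ae_eq_indicator {m : MeasurableSpace Ω} {s B : Set Ω}
    (hs : MeasurableSet[m] s) (hB : MeasurableSet[mΩ] B) :
    μ⟦s ∩ B | m⟧ =ᵐ[μ] s.indicator (μ⟦B | m⟧) := by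
  rw [← Set.indicator_indicator]
  exact condExp_indicator ((integrable_const (1 : ℝ)).indicator hB) hs

theorem condIndep_sup_left_of_indep [StandardBorelSpace Ω] {m mε m₂ : MeasurableSpace Ω}
    (hm : m ≤ mΩ) (hmε : mε ≤ mΩ) (hm₂ : m₂ ≤ mΩ) (h : Indep mε (m ⊔ m₂) μ) :
    CondIndep m (m ⊔ mε) m₂ hm μ := by
  refine CondIndepSets.condIndep (sup_le hm hmε) hm₂ (isPiSystem_image2_inter m mε)
    (@isPiSystem_measurableSet Ω m₂) (generateFrom_image2_inter m mε).symm
    (@generateFrom_measurableSet Ω m₂).symm ?_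
  rw [condIndepSets_iff]
  rotate_left
  · rintro _ ⟨s, hs, t, ht, rfl⟩
    exact (hm s hs).inter (hmε t ht)
  · exact hm₂
  rintro _ u ⟨s, hs, t, ht, rfl⟩ hu
  have hfactor : ∀ v, MeasurableSet[m₂] v →
      μ⟦s ∩ t ∩ v | m⟧ =ᵐ[μ] fun ω => μ.real t * s.indicator (μ⟦v | m⟧) ω := by
    intro v hv
    rw [Set.inter_right_comm, Set.inter_comm]
    filter_upwards [condExp_inter_ae_eq_mul_of_indep le_sup_left (sup_le hm hm₂) hmε h ht
        ((le_sup_left (b := m₂) s hs).inter (le_sup_right (a := m) v hv)),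
      condExp_inter_ae_eq_indicator (μ := μ) hs (hm₂ v hv)] with ω h₁ h₂
    rw [h₁, h₂]
  have hone : μ[fun _ => (1 : ℝ) | m] = fun _ => 1 := condExp_const hm 1
  filter_upwards [hfactor u hu, Set.inter_univ (s ∩ t) ▸ hfactor Set.univ .univ] with ω hstu hst
  by_cases hω : ω ∈ s <;> simp [hstu, hst, hone, hω]

end

theorem descendant_of_response_satisfies_separation_general
    {Ω : Type*} [MeasurableSpace Ω] [StandardBorelSpace Ω]
    (μ : Measure Ω) [IsProbabilityMeasure μ]
    {α γ E δ : Type*} [MeasurableSpace α] [MeasurableSpace γ] [MeasurableSpace E]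
    [MeasurableSpace δ]
    (A : Ω → α) (Y : Ω → γ) (ε : Ω → E)
    (hA : Measurable A) (hY : Measurable Y) (hε : Measurable ε)
    (hindep : IndepFun ε (fun ω => (A ω, Y ω)) μ)
    (f : γ × E → δ) (hf : Measurable f) :
    CondIndepFun (MeasurableSpace.comap Y inferInstance) hY.comap_le
      (fun ω => f (Y ω, ε ω)) A μ := by
  have hnoise : Indep (MeasurableSpace.comap ε inferInstance)
      (MeasurableSpace.comap Y inferInstance ⊔ MeasurableSpace.comap A inferInstance) μ := by
    rw [sup_comm, ← comap_prodMk]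
    exact hindep
  have hsep := condIndep_sup_left_of_indep hY.comap_le hε.comap_le hA.comap_le hnoise
  rw [condIndepFun_iff_condIndep]
  refine condIndep_of_condIndep_of_le_left hsep ?_
  rw [← comap_prodMk]
  exact (hf.comp (comap_measurable _)).comap_le

/-- **Descendants of the response satisfy Separation.**
If the exogenous noise `ε` is independent of the pair `(A, Y)`, then for any measurable
function `f` the prediction `R = f(Y, ε)` is conditionally independent of `A` given `Y`,
i.e. `R` satisfies Separation. -/
theorem descendant_of_response_satisfies_separation
    {Ω : Type*} [MeasurableSpace Ω] [StandardBorelSpace Ω] [Nonempty Ω]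
    (μ : Measure Ω) [IsProbabilityMeasure μ]
    {α γ E δ : Type*} [MeasurableSpace α] [MeasurableSpace γ] [MeasurableSpace E]
    [MeasurableSpace δ]
    (A : Ω → α) (Y : Ω → γ) (ε : Ω → E)
    (hA : Measurable A) (hY : Measurable Y) (hε : Measurable ε)
    (hindep : IndepFun ε (fun ω => (A ω, Y ω)) μ)
    (f : γ × E → δ) (hf : Measurable f) :
    CondIndepFun (MeasurableSpace.comap Y inferInstance) hY.comap_le
      (fun ω => f (Y ω, ε ω)) A μ :=
  descendant_of_response_satisfies_separation_general μ A Y ε hA hY hε hindep f hf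
end

section
/- Let A and X be random variables taking values in finite sets 𝔸 and 𝕏 with P(A=a, X=x) > 0 for all a ∈ 𝔸, x ∈ 𝕏, let ε be a random element independent of the pair (A, X), and let R = g(A, X, ε) for a measurable function g. Then: (i) for every a ∈ 𝔸 and x ∈ 𝕏, the conditional distribution of R given (A=a, X=x) equals the law of ω ↦ g(a, x, ε(ω)); and (ii) the law of g(a, x, ε) does not depend on a for every fixed x (the controlled-direct-effect criterion) if and only if R and A are conditionally independent given X. -/
open MeasureTheory ProbabilityTheory

/-!
Since `ε` is independent of `(A, X)`, conditioning `R = g(A, X, ε)` on the atom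
`{A = a, X = x}` amounts to substituting `(a, x)` into `g`, which gives (i). As `X` is
finite-valued with fibers of positive mass, `R ⊥ A | X` means that `R` and `A` are independent
under each `μ[|X ← x]`; and independence of `R` from a finite-valued `A` with non-null fibers
means that the law of `R` given `A = a` does not depend on `a`. By (i) that law, under
`μ[|X ← x]`, is the interventional law of `g(a, x, ε)`.
-/

namespace ProbabilityTheory

variable {Ω α β : Type*} {mΩ : MeasurableSpace Ω} {μ : Measure Ω}

lemma comp_ae_eq_comp_iff {γ : Type*} {X : Ω → β} (hμX : ∀ x, μ (X ⁻¹' {x}) ≠ 0)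
    {F G : β → γ} :
    (fun ω => F (X ω)) =ᵐ[μ] (fun ω => G (X ω)) ↔ F = G := by
  refine ⟨fun h => funext fun x => by_contra fun hne => hμX x ?_, fun h => h ▸ .rfl⟩
  refine measure_mono_null (fun ω hω => ?_) (ae_iff.mp h)
  rw [Set.mem_preimage, Set.mem_singleton_iff] at hω
  exact fun heq => hne (hω ▸ heq)

variable [MeasurableSpace α] [MeasurableSpace β]

lemma IndepFun.map_cond_eq_map [IsFiniteMeasure μ] {A : Ω → α} {R : Ω → β}
    (h : IndepFun R A μ) (hR : Measurable R) {t : Set α} (ht : MeasurableSet t)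
    (hμt : μ (A ⁻¹' t) ≠ 0) :
    (μ[|A ⁻¹' t]).map R = μ.map R := by
  ext s hs
  rw [Measure.map_apply hR hs, Measure.map_apply hR hs, cond_apply' (hR hs), Set.inter_comm,
    h.measure_inter_preimage_eq_mul _ _ hs ht, mul_comm, mul_assoc,
    ENNReal.mul_inv_cancel hμt (measure_ne_top _ _), mul_one]

lemma IndepFun.map_cond_fiber_eq [IsFiniteMeasure μ] [MeasurableSingletonClass α] {γ : Type*}
    [MeasurableSpace γ] {Z : Ω → α} {ε : Ω → β} (h : IndepFun ε Z μ) (hZ : Measurable Z)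
    (hε : Measurable ε) {φ : α → β → γ} (hφ : ∀ z, Measurable (φ z)) {z : α}
    (hz : μ (Z ⁻¹' {z}) ≠ 0) :
    (μ[|Z ← z]).map (fun ω => φ (Z ω) (ε ω)) = μ.map (fun ω => φ z (ε ω)) := by
  have h_on_fiber : (fun ω => φ (Z ω) (ε ω)) =ᵐ[μ[|Z ← z]] φ z ∘ ε := by
    filter_upwards [ae_cond_mem (hZ (measurableSet_singleton z))] with ω hω
    rw [Set.mem_preimage, Set.mem_singleton_iff] at hω
    rw [Function.comp_apply, hω]
  rw [Measure.map_congr h_on_fiber, ← Measure.map_map (hφ z) hε,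
    h.map_cond_eq_map hε (measurableSet_singleton z) hz, Measure.map_map (hφ z) hε]
  rfl

lemma indepFun_iff_measure_inter_preimage_singleton_eq_mul [Finite α]
    [MeasurableSingletonClass α] {A : Ω → α} {R : Ω → β} (hA : Measurable A) :
    IndepFun R A μ ↔
      ∀ a, ∀ s, MeasurableSet s → μ (R ⁻¹' s ∩ A ⁻¹' {a}) = μ (R ⁻¹' s) * μ (A ⁻¹' {a}) := by
  refine ⟨fun h a s hs => h.measure_inter_preimage_eq_mul _ _ hs (measurableSet_singleton a),
    fun h => indepFun_iff_measure_inter_preimage_eq_mul.mpr fun s t hs ht => ?_⟩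
  have hfib : ∀ a ∈ (Set.toFinite t).toFinset, MeasurableSet (A ⁻¹' {a}) :=
    fun a _ => hA (measurableSet_singleton a)
  calc μ (R ⁻¹' s ∩ A ⁻¹' t)
      = μ.restrict (R ⁻¹' s) (A ⁻¹' t) := by
        rw [Measure.restrict_apply (hA ht), Set.inter_comm]
    _ = ∑ a ∈ (Set.toFinite t).toFinset, μ.restrict (R ⁻¹' s) (A ⁻¹' {a}) := by
        rw [sum_measure_preimage_singleton _ hfib, Set.Finite.coe_toFinset]
    _ = ∑ a ∈ (Set.toFinite t).toFinset, μ (R ⁻¹' s) * μ (A ⁻¹' {a}) := by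
        refine Finset.sum_congr rfl fun a ha => ?_
        rw [Measure.restrict_apply (hfib a ha), Set.inter_comm, h a s hs]
    _ = μ (R ⁻¹' s) * μ (A ⁻¹' t) := by
        rw [← Finset.mul_sum, sum_measure_preimage_singleton _ hfib, Set.Finite.coe_toFinset]

lemma indepFun_iff_map_cond_eq_map [IsFiniteMeasure μ] [Finite α] [MeasurableSingletonClass α]
    {A : Ω → α} {R : Ω → β} (hA : Measurable A) (hR : Measurable R)
    (hμA : ∀ a, μ (A ⁻¹' {a}) ≠ 0) :
    IndepFun R A μ ↔ ∀ a, (μ[|A ← a]).map R = μ.map R := by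
  rw [indepFun_iff_measure_inter_preimage_singleton_eq_mul hA]
  refine forall_congr' fun a => ?_
  rw [Measure.ext_iff]
  refine forall₂_congr fun s hs => ?_
  rw [Measure.map_apply hR hs, Measure.map_apply hR hs, Set.inter_comm,
    ← cond_mul_eq_inter (hA (measurableSet_singleton a)),
    ENNReal.mul_left_inj (hμA a) (measure_ne_top _ _)]

lemma indepFun_iff_map_cond_eq_map_cond [IsProbabilityMeasure μ] [Fintype α]
    [MeasurableSingletonClass α] {A : Ω → α} {R : Ω → β} (hA : Measurable A) (hR : Measurable R)
    (hμA : ∀ a, μ (A ⁻¹' {a}) ≠ 0) :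
    IndepFun R A μ ↔ ∀ a a', (μ[|A ← a]).map R = (μ[|A ← a']).map R := by
  rw [indepFun_iff_map_cond_eq_map hA hR hμA]
  refine ⟨fun h a a' => (h a).trans (h a').symm, fun h a => ?_⟩
  ext s hs
  calc (μ[|A ← a]).map R s
      = (∑ a', μ (A ⁻¹' {a'})) * (μ[|A ← a]).map R s := by
        rw [sum_measure_preimage_singleton _ fun a' _ => hA (measurableSet_singleton a'),
          Finset.coe_univ, Set.preimage_univ, measure_univ, one_mul]
    _ = ∑ a', μ (A ⁻¹' {a'}) * μ[|A ← a'] (R ⁻¹' s) := by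
        rw [Finset.sum_mul]
        refine Finset.sum_congr rfl fun a' _ => ?_
        rw [h a a', Measure.map_apply hR hs]
    _ = μ.map R s := by
        conv_rhs => rw [← sum_meas_smul_cond_fiber hA μ]
        simp [Measure.map_apply hR hs]

section Discrete

variable [Finite β] [MeasurableSingletonClass β] {X : Ω → β}

lemma condExp_set_comap_ae_eq_cond [IsFiniteMeasure μ] (hX : Measurable X) {S : Set Ω}
    (hS : MeasurableSet S) :
    μ⟦S | MeasurableSpace.comap X inferInstance⟧ =ᵐ[μ] fun ω => (μ[|X ← X ω]).real S := by
  set c : β → ℝ := fun x => (μ[|X ← x]).real S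
  have hc_int : Integrable c (μ.map X) := .of_finite
  refine (ae_eq_condExp_of_forall_setIntegral_eq hX.comap_le
    ((integrable_const (1 : ℝ)).indicator hS)
    (fun _ _ _ => ((integrable_map_measure hc_int.aestronglyMeasurable
      hX.aemeasurable).mp hc_int).integrableOn) ?_
    ((measurable_of_finite c).comp (comap_measurable X)).aestronglyMeasurable).symm
  rintro _ ⟨t, -, rfl⟩ -
  obtain ⟨u, rfl⟩ : ∃ u : Finset β, ↑u = t := ⟨(Set.toFinite t).toFinset, by simp⟩
  have hfib : ∀ x ∈ u, MeasurableSet (X ⁻¹' {x}) := fun x _ => hX (measurableSet_singleton x)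
  calc ∫ ω in X ⁻¹' u, c (X ω) ∂μ
      = ∑ x ∈ u, μ.real (X ⁻¹' {x} ∩ S) := by
        rw [← setIntegral_map u.measurableSet hc_int.aestronglyMeasurable hX.aemeasurable,
          setIntegral_finset _ hc_int.integrableOn]
        refine Finset.sum_congr rfl fun x hx => ?_
        rw [map_measureReal_apply hX (measurableSet_singleton x), smul_eq_mul, mul_comm]
        simp only [c, measureReal_def]
        rw [← ENNReal.toReal_mul, cond_mul_eq_inter (hfib x hx)]
    _ = ∫ ω in X ⁻¹' u, S.indicator 1 ω ∂μ := by
        rw [integral_indicator_one hS, measureReal_restrict_apply hS, Set.inter_comm,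
          ← measureReal_restrict_apply (hX u.measurableSet),
          ← sum_measureReal_preimage_singleton u hfib]
        refine Finset.sum_congr rfl fun x hx => ?_
        rw [measureReal_restrict_apply (hfib x hx)]

lemma condIndepFun_comap_iff_forall_indepFun_cond [StandardBorelSpace Ω] [IsFiniteMeasure μ]
    {γ γ' : Type*} [MeasurableSpace γ] [MeasurableSpace γ'] (hX : Measurable X)
    (hμX : ∀ x, μ (X ⁻¹' {x}) ≠ 0) {f : Ω → γ} {g : Ω → γ'} (hf : Measurable f)
    (hg : Measurable g) :
    CondIndepFun (MeasurableSpace.comap X inferInstance) hX.comap_le f g μ ↔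
      ∀ x, IndepFun f g μ[|X ← x] := by
  simp_rw [condIndepFun_iff_condExp_inter_preimage_eq_mul hf hg,
    indepFun_iff_measure_inter_preimage_eq_mul]
  have hcond {S : Set Ω} (hS : MeasurableSet S) := condExp_set_comap_ae_eq_cond (μ := μ) hX hS
  have key : ∀ s t, MeasurableSet s → MeasurableSet t →
      (((μ⟦f ⁻¹' s ∩ g ⁻¹' t | MeasurableSpace.comap X inferInstance⟧) =ᵐ[μ]
        fun ω => (μ⟦f ⁻¹' s | MeasurableSpace.comap X inferInstance⟧) ω *
          (μ⟦g ⁻¹' t | MeasurableSpace.comap X inferInstance⟧) ω) ↔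
      ∀ x, μ[f ⁻¹' s ∩ g ⁻¹' t | X ⁻¹' {x}] =
        μ[f ⁻¹' s | X ⁻¹' {x}] * μ[g ⁻¹' t | X ⁻¹' {x}]) := by
    intro s t hs ht
    rw [(hcond ((hf hs).inter (hg ht))).congr_left, Filter.EventuallyEq.congr_right
        (g := fun ω => _ * _) (h := fun ω => _ * _) ((hcond (hf hs)).mul (hcond (hg ht))),
      comp_ae_eq_comp_iff hμX (F := fun x => (μ[|X ← x]).real (f ⁻¹' s ∩ g ⁻¹' t))
        (G := fun x => (μ[|X ← x]).real (f ⁻¹' s) * (μ[|X ← x]).real (g ⁻¹' t)), funext_iff]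
    refine forall_congr' fun x => ?_
    rw [measureReal_def, measureReal_def, measureReal_def, ← ENNReal.toReal_mul,
      ENNReal.toReal_eq_toReal_iff' (measure_ne_top _ _)
        (ENNReal.mul_ne_top (measure_ne_top _ _) (measure_ne_top _ _))]
  exact ⟨fun h x s t hs ht => (key s t hs ht).mp (h s t hs ht) x,
    fun h s t hs ht => (key s t hs ht).mpr fun x => h x s t hs ht⟩

end Discrete

end ProbabilityTheory

/-- **The controlled-direct-effect criterion is equivalent to Conditional Independence.**
Let `A`, `X` take values in finite sets with strictly positive joint distribution, let the
exogenous noise `ε` be independent of the pair `(A, X)`, and let `R = g(A, X, ε)`. Then: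
(i) the conditional distribution of `R` given `(A = a, X = x)` is the law of
`ω ↦ g(a, x, ε ω)`; and (ii) the law of `g(a, x, ε)` does not depend on `a` for every
fixed `x` if and only if `R` and `A` are conditionally independent given `X`. -/
theorem cde_iff_condIndep
    {Ω : Type*} [MeasurableSpace Ω] [StandardBorelSpace Ω] [Nonempty Ω]
    (μ : Measure Ω) [IsProbabilityMeasure μ]
    {𝔸 𝕏 E δ : Type*} [Fintype 𝔸] [Fintype 𝕏]
    [MeasurableSpace 𝔸] [MeasurableSingletonClass 𝔸]
    [MeasurableSpace 𝕏] [MeasurableSingletonClass 𝕏]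
    [MeasurableSpace E] [MeasurableSpace δ]
    (A : Ω → 𝔸) (X : Ω → 𝕏) (ε : Ω → E)
    (hA : Measurable A) (hX : Measurable X) (hε : Measurable ε)
    (hpos : ∀ (a : 𝔸) (x : 𝕏), 0 < μ {ω | A ω = a ∧ X ω = x})
    (hindep : IndepFun ε (fun ω => (A ω, X ω)) μ)
    (g : 𝔸 × 𝕏 × E → δ) (hg : Measurable g)
    (R : Ω → δ) (hR : R = fun ω => g (A ω, X ω, ε ω)) :
    (∀ (a : 𝔸) (x : 𝕏),
        (μ[|{ω | A ω = a ∧ X ω = x}]).map R = μ.map (fun ω => g (a, x, ε ω)))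
      ∧ ((∀ (x : 𝕏) (a a' : 𝔸),
            μ.map (fun ω => g (a, x, ε ω)) = μ.map (fun ω => g (a', x, ε ω)))
          ↔ CondIndepFun (MeasurableSpace.comap X inferInstance) hX.comap_le R A μ) := by
  have hfiber (a : 𝔸) (x : 𝕏) :
      {ω | A ω = a ∧ X ω = x} = (fun ω => (A ω, X ω)) ⁻¹' {(a, x)} := by
    ext ω; simp
  have hcond_law (a : 𝔸) (x : 𝕏) :
      (μ[|{ω | A ω = a ∧ X ω = x}]).map R = μ.map (fun ω => g (a, x, ε ω)) := by
    rw [hR, hfiber]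
    exact hindep.map_cond_fiber_eq (φ := fun z e => g (z.1, z.2, e)) (hA.prodMk hX) hε
      (fun z => hg.comp (measurable_const.prodMk (measurable_const.prodMk measurable_id)))
      (hfiber a x ▸ (hpos a x).ne')
  refine ⟨hcond_law, ?_⟩
  have hR_meas : Measurable R := hR ▸ hg.comp (hA.prodMk (hX.prodMk hε))
  have hμX (x : 𝕏) : μ (X ⁻¹' {x}) ≠ 0 := by
    obtain ⟨ω⟩ := ‹Nonempty Ω›
    exact ((hpos (A ω) x).trans_le (measure_mono fun _ h => h.2)).ne'
  have hμXA (x : 𝕏) (a : 𝔸) : μ[|X ← x] (A ⁻¹' {a}) ≠ 0 :=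
    (cond_pos_of_inter_ne_zero (hX (measurableSet_singleton x))
      (Set.inter_comm (A ⁻¹' {a}) _ ▸ (hpos a x).ne')).ne'
  have hcond_cond (x : 𝕏) (a : 𝔸) :
      μ[|X ← x][|A ← a] = μ[|{ω | A ω = a ∧ X ω = x}] := by
    rw [cond_cond_eq_cond_inter (hX (measurableSet_singleton x))
      (hA (measurableSet_singleton a)), Set.inter_comm]
    rfl
  rw [condIndepFun_comap_iff_forall_indepFun_cond hX hμX hR_meas hA]
  refine forall_congr' fun x => ?_
  have := cond_isProbabilityMeasure (hμX x)
  simp_rw [indepFun_iff_map_cond_eq_map_cond hA hR_meas (hμXA x), hcond_cond, hcond_law]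
end
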